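/- arXiv:2108.02492 — 2 statements merged into one kernel-verified Lean document; each statement's English description precedes it below -/
import Mathlib

section
/- The implicit symplectic Euler step is symplectic (one-dimensional case): let H : ℝ² → ℝ be twice continuously differentiable and let Φ = (Q, P) : U → ℝ² be a differentiable map on an open set U ⊆ ℝ² satisfying Q(q,p) = q + h H_p(Q(q,p), p) and P(q,p) = p - h H_q(Q(q,p), p) for all (q,p) ∈ U. If 1 - h H_{qp}(Q(q,p),p) ≠ 0, then det Φ'(q,p) = 1. -/
/-!
Differentiating the two implicit equations at `z` (the chain rule through `w ↦ (Q w, w.2)`)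
gives linear relations between the entries of `Φ'` and the second partials of `H`.
The `P`-equations reduce the determinant to `Q_q (1 - h H_{pq})`, the `Q`-equation says
`Q_q (1 - h H_{qp}) = 1`, and the mixed partials of a `C²` function agree.
-/

open Matrix Filter Topology ContinuousLinearMap

theorem ContinuousLinearMap.apply_prod_eq {𝕜 M : Type*} [Semiring 𝕜] [TopologicalSpace 𝕜]
    [AddCommMonoid M] [Module 𝕜 M] [TopologicalSpace M] (L : 𝕜 × 𝕜 →L[𝕜] M) (v : 𝕜 × 𝕜) :
    L v = v.1 • L (1, 0) + v.2 • L (0, 1) := by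
  rw [← map_smul, ← map_smul, ← map_add]
  simp

theorem HasFDerivAt.comp_prodMk_snd {𝕜 : Type*} [NontriviallyNormedField 𝕜]
    {g Q : 𝕜 × 𝕜 → 𝕜} {g' Q' : 𝕜 × 𝕜 →L[𝕜] 𝕜} {z : 𝕜 × 𝕜}
    (hg : HasFDerivAt g g' (Q z, z.2)) (hQ : HasFDerivAt Q Q' z) :
    HasFDerivAt (fun w => g (Q w, w.2)) (g' (1, 0) • Q' + g' (0, 1) • snd 𝕜 𝕜 𝕜) z := by
  refine (hg.comp z (hQ.prodMk hasFDerivAt_snd)).congr_fderiv ?_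
  refine ContinuousLinearMap.ext fun v => ?_
  simp [g'.apply_prod_eq (Q' v, v.2), mul_comm]

theorem fderiv_fderiv_apply_comm {𝕜 E F : Type*} [RCLike 𝕜] [NormedAddCommGroup E]
    [NormedSpace 𝕜 E] [NormedAddCommGroup F] [NormedSpace 𝕜 F] {f : E → F} {x : E}
    (hf : ContDiffAt 𝕜 2 f x) (v w : E) :
    fderiv 𝕜 (fun y => fderiv 𝕜 f y v) x w = fderiv 𝕜 (fun y => fderiv 𝕜 f y w) x v := by
  have hd : DifferentiableAt 𝕜 (fderiv 𝕜 f) x :=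
    (hf.fderiv_right (m := 1) le_rfl).differentiableAt one_ne_zero
  rw [fderiv_clm_apply hd (differentiableAt_const v),
    fderiv_clm_apply hd (differentiableAt_const w)]
  simpa using hf.isSymmSndFDerivAt (by simp) w v

theorem stmt_11_general (H : ℝ × ℝ → ℝ) (hH : ContDiff ℝ 2 H) (h : ℝ)
    (U : Set (ℝ × ℝ)) (hU : IsOpen U)
    (Q P : ℝ × ℝ → ℝ)
    (hΦd : ∀ z ∈ U, DifferentiableAt ℝ (fun w => (Q w, P w)) z)
    (hQ : ∀ z ∈ U, Q z = z.1 + h * fderiv ℝ H (Q z, z.2) (0, 1))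
    (hP : ∀ z ∈ U, P z = z.2 - h * fderiv ℝ H (Q z, z.2) (1, 0))
    (z : ℝ × ℝ) (hz : z ∈ U) :
    (!![(fderiv ℝ (fun w => (Q w, P w)) z (1, 0)).1,
        (fderiv ℝ (fun w => (Q w, P w)) z (0, 1)).1;
        (fderiv ℝ (fun w => (Q w, P w)) z (1, 0)).2,
        (fderiv ℝ (fun w => (Q w, P w)) z (0, 1)).2]).det = 1 := by
  set DΦ := fderiv ℝ (fun w => (Q w, P w)) z
  have hΦ : HasFDerivAt (fun w => (Q w, P w)) DΦ z := (hΦd z hz).hasFDerivAt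
  have hD2H : DifferentiableAt ℝ (fderiv ℝ H) (Q z, z.2) :=
    (hH.fderiv_right (m := 1) le_rfl).differentiable one_ne_zero _
  have hHp := (hD2H.clm_apply (differentiableAt_const ((0, 1) : ℝ × ℝ))).hasFDerivAt
  have hHq := (hD2H.clm_apply (differentiableAt_const ((1, 0) : ℝ × ℝ))).hasFDerivAt
  have hQ' := hΦ.fst.unique <|
    (hasFDerivAt_fst.add ((hHp.comp_prodMk_snd hΦ.fst).const_mul h)).congr_of_eventuallyEq
      (eventuallyEq_of_mem (hU.mem_nhds hz) hQ)
  have hP' := hΦ.snd.unique <|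
    (hasFDerivAt_snd.sub ((hHq.comp_prodMk_snd hΦ.fst).const_mul h)).congr_of_eventuallyEq
      (eventuallyEq_of_mem (hU.mem_nhds hz) hP)
  have hQq := congr($hQ' (1, 0))
  have hPq := congr($hP' (1, 0))
  have hPp := congr($hP' (0, 1))
  simp only [ContinuousLinearMap.comp_apply, coe_fst', coe_snd', smul_add, _root_.add_apply,
    _root_.sub_apply, _root_.smul_apply, smul_eq_mul, mul_zero, mul_one, add_zero,
    zero_sub] at hQq hPq hPp
  have hsymm := fderiv_fderiv_apply_comm hH.contDiffAt ((1, 0) : ℝ × ℝ) (0, 1) (x := (Q z, z.2))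
  rw [det_fin_two_of]
  linear_combination (DΦ (1, 0)).1 * hPp - (DΦ (0, 1)).1 * hPq + hQq - h * (DΦ (1, 0)).1 * hsymm

/-- The implicit symplectic Euler step is symplectic (1D case): if `Φ = (Q, P)` on an
open set `U` satisfies `Q = q + h H_p(Q, p)`, `P = p - h H_q(Q, p)` and
`1 - h H_{qp}(Q, p) ≠ 0`, then `det Φ' = 1`. -/
theorem stmt_11 (H : ℝ × ℝ → ℝ) (hH : ContDiff ℝ 2 H) (h : ℝ)
    (U : Set (ℝ × ℝ)) (hU : IsOpen U)
    (Q P : ℝ × ℝ → ℝ)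
    (hΦd : ∀ z ∈ U, DifferentiableAt ℝ (fun w => (Q w, P w)) z)
    (hQ : ∀ z ∈ U, Q z = z.1 + h * fderiv ℝ H (Q z, z.2) (0, 1))
    (hP : ∀ z ∈ U, P z = z.2 - h * fderiv ℝ H (Q z, z.2) (1, 0))
    (z : ℝ × ℝ) (hz : z ∈ U)
    (hreg : 1 - h * fderiv ℝ (fun x => fderiv ℝ H x (0, 1)) (Q z, z.2) (1, 0) ≠ 0) :
    (!![(fderiv ℝ (fun w => (Q w, P w)) z (1, 0)).1,
        (fderiv ℝ (fun w => (Q w, P w)) z (0, 1)).1;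
        (fderiv ℝ (fun w => (Q w, P w)) z (1, 0)).2,
        (fderiv ℝ (fun w => (Q w, P w)) z (0, 1)).2]).det = 1 :=
  stmt_11_general H hH h U hU Q P hΦd hQ hP z hz
end

section
/- A type-2 generating function produces a symplectic map (one-dimensional case): let S : ℝ² → ℝ be twice continuously differentiable and let Φ = (Q, P) : U → ℝ² be a differentiable map on an open set U ⊆ ℝ² such that for all (q,p) ∈ U: p = ∂₁S(q, P(q,p)) and Q(q,p) = ∂₂S(q, P(q,p)), and ∂₁∂₂S(q, P(q,p)) ≠ 0. Then det Φ'(q,p) = 1 for all (q,p) ∈ U. -/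
/-! Differentiating `p = ∂₁S(q, P(q, p))` in `p` gives `∂₂∂₁S · ∂ₚP = 1`, and `Q = ∂₂S(q, P)`
gives `Q' = ∂₂∇S ∘ (q, P)'`. Expanding `det Φ'`, the `∂₂∂₂S` terms cancel and what is left is
`∂₁∂₂S · ∂ₚP`, which equals `1` by symmetry of the Hessian. -/

open Matrix

theorem hasFDerivAt_fderiv_apply_comp {𝕜 E F G : Type*} [NontriviallyNormedField 𝕜]
    [NormedAddCommGroup E] [NormedSpace 𝕜 E] [NormedAddCommGroup F] [NormedSpace 𝕜 F]
    [NormedAddCommGroup G] [NormedSpace 𝕜 G] {S : F → G} {g : E → F} {g' : E →L[𝕜] F} {z : E}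
    (hS : DifferentiableAt 𝕜 (fderiv 𝕜 S) (g z)) (hg : HasFDerivAt g g' z) (v : F) :
    HasFDerivAt (fun w => fderiv 𝕜 S (g w) v) ((fderiv 𝕜 (fderiv 𝕜 S) (g z)).flip v ∘L g') z :=
  (ContinuousLinearMap.apply 𝕜 G v).hasFDerivAt.comp z (hS.hasFDerivAt.comp z hg)

theorem det_jacobian_eq_of_symm_hessian {𝕜 : Type*} [NontriviallyNormedField 𝕜]
    (D : 𝕜 × 𝕜 →L[𝕜] 𝕜 × 𝕜 →L[𝕜] 𝕜) (hD : D (1, 0) (0, 1) = D (0, 1) (1, 0)) (a b : 𝕜) :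
    D (1, a) (0, 1) * b - D (0, b) (0, 1) * a = D (0, b) (1, 0) := by
  have h1 : ((1 : 𝕜), a) = (1, 0) + a • (0, 1) := by simp
  have h2 : ((0 : 𝕜), b) = b • (0, 1) := by simp
  rw [h1, h2]
  simp only [map_add, map_smul, _root_.add_apply, _root_.smul_apply, smul_eq_mul, hD]
  ring

theorem stmt_12_general (S : ℝ × ℝ → ℝ) (hS : ContDiff ℝ 2 S)
    (U : Set (ℝ × ℝ)) (hU : IsOpen U)
    (Q P : ℝ × ℝ → ℝ)
    (hΦd : ∀ z ∈ U, DifferentiableAt ℝ (fun w => (Q w, P w)) z)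
    (hp : ∀ z ∈ U, z.2 = fderiv ℝ S (z.1, P z) (1, 0))
    (hQ : ∀ z ∈ U, Q z = fderiv ℝ S (z.1, P z) (0, 1)) :
    ∀ z ∈ U,
      (!![(fderiv ℝ (fun w => (Q w, P w)) z (1, 0)).1,
          (fderiv ℝ (fun w => (Q w, P w)) z (0, 1)).1;
          (fderiv ℝ (fun w => (Q w, P w)) z (1, 0)).2,
          (fderiv ℝ (fun w => (Q w, P w)) z (0, 1)).2]).det = 1 := by
  intro z hz
  have hQd : DifferentiableAt ℝ Q z := (hΦd z hz).fst
  have hPd : DifferentiableAt ℝ P z := (hΦd z hz).snd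
  set D := fderiv ℝ (fderiv ℝ S) (z.1, P z)
  have hdS := hasFDerivAt_fderiv_apply_comp
    ((hS.fderiv_right le_rfl).differentiable one_ne_zero _)
    (hasFDerivAt_fst.prodMk hPd.hasFDerivAt)
  have hP' := ((hdS (1, 0)).congr_of_eventuallyEq
    (Filter.eventually_of_mem (hU.mem_nhds hz) hp)).unique hasFDerivAt_snd
  have hQ' := ((hdS (0, 1)).congr_of_eventuallyEq
    (Filter.eventually_of_mem (hU.mem_nhds hz) hQ)).fderiv
  have hPp : D (0, fderiv ℝ P z (0, 1)) (1, 0) = 1 := by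
    simpa using congrArg (· (0, 1)) hP'
  rw [det_fin_two_of, hQd.fderiv_prodMk hPd]
  simp only [ContinuousLinearMap.prod_apply, hQ', ContinuousLinearMap.comp_apply,
    ContinuousLinearMap.flip_apply, ContinuousLinearMap.coe_fst']
  rw [det_jacobian_eq_of_symm_hessian D (hS.contDiffAt.isSymmSndFDerivAt (by simp) _ _), hPp]

/-- A type-2 generating function produces a symplectic map (1D case): if `Φ = (Q, P)` on
an open set `U` satisfies `p = ∂₁S(q, P)`, `Q = ∂₂S(q, P)` with `∂₁∂₂S(q, P) ≠ 0`,
then `det Φ' = 1` on `U`. -/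
theorem stmt_12 (S : ℝ × ℝ → ℝ) (hS : ContDiff ℝ 2 S)
    (U : Set (ℝ × ℝ)) (hU : IsOpen U)
    (Q P : ℝ × ℝ → ℝ)
    (hΦd : ∀ z ∈ U, DifferentiableAt ℝ (fun w => (Q w, P w)) z)
    (hp : ∀ z ∈ U, z.2 = fderiv ℝ S (z.1, P z) (1, 0))
    (hQ : ∀ z ∈ U, Q z = fderiv ℝ S (z.1, P z) (0, 1))
    (hreg : ∀ z ∈ U, fderiv ℝ (fun x => fderiv ℝ S x (0, 1)) (z.1, P z) (1, 0) ≠ 0) :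
    ∀ z ∈ U,
      (!![(fderiv ℝ (fun w => (Q w, P w)) z (1, 0)).1,
          (fderiv ℝ (fun w => (Q w, P w)) z (0, 1)).1;
          (fderiv ℝ (fun w => (Q w, P w)) z (1, 0)).2,
          (fderiv ℝ (fun w => (Q w, P w)) z (0, 1)).2]).det = 1 :=
  stmt_12_general S hS U hU Q P hΦd hp hQ
end
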